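/- arXiv:1210.1190 — 2 statements merged into one kernel-verified Lean document; each statement's English description precedes it below -/
import Mathlib

section
/- (Correctness of the XRAY detection step) Let X ∈ ℝ₊^{m×n} with nonzero columns satisfy X = X_A H with H ≥ 0, where A indexes the generators of the extreme rays of cone(X). Let Aᵗ ⊆ A be a current subset of anchors, let R = X − X_{Aᵗ} H* where H* = argmin_{B ≥ 0} ‖X − X_{Aᵗ} B‖_F², and suppose column i satisfies Rᵢ ≠ 0. Let p be strictly positive, and set j* = argmax_j Rᵢᵀ Xⱼ/(pᵀXⱼ). If the maximizer j* is unique, then j* ∈ A \ Aᵗ, i.e., X_{j*} generates an extreme ray of cone(X) not previously selected. -/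
/-!
Write `r` for the residual column `Rᵢ`. Since `H*` solves a nonnegative least-squares problem
column by column, moving its `i`-th column along the feasible directions `eₐ` (`a ∈ Aᵗ`) and
`±H*ᵢ` cannot decrease `‖r‖²`; to first order this gives `rᵀ Xₐ ≤ 0` for `a ∈ Aᵗ` and
`rᵀ X_{Aᵗ} H*ᵢ = 0`, hence `rᵀ Xᵢ = ‖r‖² > 0`. So the maximal criterion value is positive, while
it is `≤ 0` on `Aᵗ`. Off `A`, the criterion `rᵀ Xⱼ / pᵀ Xⱼ` of `Xⱼ = X_A Hⱼ` is a weighted mean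
of the criteria of the anchors, so it cannot strictly exceed all of them.
-/

open Matrix

open Filter Topology Set

theorem le_of_forall_sum_le_sum_update {ν β M : Type*} [Fintype ν] [DecidableEq ν]
    [AddCommMonoid M] [PartialOrder M] [IsOrderedCancelAddMonoid M]
    (φ : ν → β → M) {P : β → Prop} {c : ν → β} (hc : ∀ j, P (c j))
    (hmin : ∀ d : ν → β, (∀ j, P (d j)) → ∑ j, φ j (c j) ≤ ∑ j, φ j (d j))
    (j₀ : ν) {b : β} (hb : P b) : φ j₀ (c j₀) ≤ φ j₀ b := by
  have h := hmin (Function.update c j₀ b) fun j => by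
    rcases eq_or_ne j j₀ with rfl | hj <;> simp [*]
  simp only [Function.apply_update φ, Finset.sum_update_of_mem (Finset.mem_univ j₀)] at h
  rwa [Finset.sum_eq_add_sum_sdiff_singleton_of_mem (Finset.mem_univ j₀) fun j => φ j (c j),
    add_le_add_iff_right] at h

theorem dotProduct_nonpos_of_forall_sum_sq_le {ι : Type*} [Fintype ι] {r w : ι → ℝ}
    (h : ∀ t ∈ Ioc (0 : ℝ) 1, ∑ i, r i ^ 2 ≤ ∑ i, (r i - t * w i) ^ 2) : r ⬝ᵥ w ≤ 0 := by
  have hslope : ∀ t ∈ Ioc (0 : ℝ) 1, 2 * (r ⬝ᵥ w) ≤ t * (w ⬝ᵥ w) := by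
    intro t ht
    have hexpand : ∑ i, (r i - t * w i) ^ 2 =
        ∑ i, r i ^ 2 - 2 * t * (r ⬝ᵥ w) + t ^ 2 * (w ⬝ᵥ w) := by
      simp only [dotProduct, Finset.mul_sum, ← Finset.sum_sub_distrib, ← Finset.sum_add_distrib]
      exact Finset.sum_congr rfl fun i _ => by ring
    have := h t ht
    rw [hexpand] at this
    nlinarith [ht.1]
  have hlim : Tendsto (fun t : ℝ => t * (w ⬝ᵥ w)) (𝓝[>] 0) (𝓝 0) :=
    ((continuous_mul_const (w ⬝ᵥ w)).tendsto' 0 0 (zero_mul _)).mono_left nhdsWithin_le_nhds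
  linarith [ge_of_tendsto hlim (eventually_of_mem (Ioc_mem_nhdsGT one_pos) hslope)]

theorem dotProduct_pos_of_pos_of_nonneg {ι R : Type*} [Fintype ι] [Semiring R] [PartialOrder R]
    [IsStrictOrderedRing R] {p v : ι → R} (hp : ∀ i, 0 < p i) (hv : ∀ i, 0 ≤ v i) (hv₀ : v ≠ 0) :
    0 < p ⬝ᵥ v := by
  obtain ⟨i, hi⟩ := Function.ne_iff.1 hv₀
  exact Finset.sum_pos' (fun i _ => mul_nonneg (hp i).le (hv i))
    ⟨i, Finset.mem_univ i, mul_pos (hp i) ((hv i).lt_of_ne' hi)⟩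

theorem dotProduct_self_pos {ι R : Type*} [Fintype ι] [Ring R] [LinearOrder R]
    [IsStrictOrderedRing R] {v : ι → R} (hv : v ≠ 0) : 0 < v ⬝ᵥ v :=
  (Finset.sum_nonneg fun i _ => mul_self_nonneg (v i)).lt_of_ne' (dotProduct_self_eq_zero.not.2 hv)

theorem exists_div_sum_le_div {κ 𝕜 : Type*} [Field 𝕜] [LinearOrder 𝕜] [IsStrictOrderedRing 𝕜]
    {s : Finset κ} {w N D : κ → 𝕜} (hw : ∀ a ∈ s, 0 ≤ w a) (hD : ∀ a ∈ s, 0 < D a)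
    (hpos : 0 < ∑ a ∈ s, w a * D a) :
    ∃ a ∈ s, (∑ a ∈ s, w a * N a) / (∑ a ∈ s, w a * D a) ≤ N a / D a := by
  by_contra! hlt
  set ρ := (∑ a ∈ s, w a * N a) / (∑ a ∈ s, w a * D a)
  obtain ⟨a, ha, hwa⟩ : ∃ a ∈ s, 0 < w a * D a :=
    Finset.exists_lt_of_sum_lt (by simpa using hpos)
  have hterm : ∀ a ∈ s, N a < ρ * D a := fun a ha => (div_lt_iff₀ (hD a ha)).1 (hlt a ha)
  have : ∑ a ∈ s, w a * N a < ∑ a ∈ s, w a * (ρ * D a) :=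
    Finset.sum_lt_sum (fun a ha => mul_le_mul_of_nonneg_left (hterm a ha).le (hw a ha))
      ⟨a, ha, mul_lt_mul_of_pos_left (hterm a ha) (pos_of_mul_pos_left hwa (hD a ha).le)⟩
  have hρ : ∑ a ∈ s, w a * (ρ * D a) = ∑ a ∈ s, w a * N a := by
    simp_rw [mul_left_comm _ ρ, ← Finset.mul_sum]
    exact div_mul_cancel₀ _ hpos.ne'
  exact this.ne hρ.symm

section NonnegLeastSquares

variable {ι κ : Type*}

def lsqResidual (X : Matrix ι κ ℝ) (S : Finset κ) (u : ι → ℝ) (b : κ → ℝ) : ι → ℝ :=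
  fun i => u i - ∑ a ∈ S, b a * X i a

def IsNonnegLeastSquaresSol [Fintype ι] (X : Matrix ι κ ℝ) (S : Finset κ) (u : ι → ℝ)
    (h : κ → ℝ) : Prop :=
  (∀ a, 0 ≤ h a) ∧ ∀ b : κ → ℝ, (∀ a, 0 ≤ b a) →
    ∑ i, lsqResidual X S u h i ^ 2 ≤ ∑ i, lsqResidual X S u b i ^ 2

theorem lsqResidual_add_smul (X : Matrix ι κ ℝ) (S : Finset κ) (u : ι → ℝ) (b c : κ → ℝ)
    (t : ℝ) (i : ι) :
    lsqResidual X S u (b + t • c) i = lsqResidual X S u b i - t * ∑ a ∈ S, c a * X i a := by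
  simp only [lsqResidual, Pi.add_apply, Pi.smul_apply, smul_eq_mul, add_mul,
    Finset.sum_add_distrib, Finset.mul_sum, mul_assoc]
  ring

namespace IsNonnegLeastSquaresSol

variable [Fintype ι] {X : Matrix ι κ ℝ} {S : Finset κ} {u : ι → ℝ} {h : κ → ℝ}

theorem residual_dotProduct_nonpos (hs : IsNonnegLeastSquaresSol X S u h) (c : κ → ℝ)
    (hc : ∀ t ∈ Ioc (0 : ℝ) 1, ∀ a, 0 ≤ h a + t * c a) :
    lsqResidual X S u h ⬝ᵥ (fun i => ∑ a ∈ S, c a * X i a) ≤ 0 :=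
  dotProduct_nonpos_of_forall_sum_sq_le fun t ht => by
    simpa only [lsqResidual_add_smul] using hs.2 (h + t • c) (hc t ht)

theorem residual_dotProduct_col_nonpos [DecidableEq κ] (hs : IsNonnegLeastSquaresSol X S u h)
    {a : κ} (ha : a ∈ S) : lsqResidual X S u h ⬝ᵥ (fun i => X i a) ≤ 0 := by
  simpa [Pi.single_apply, ha] using
    hs.residual_dotProduct_nonpos (Pi.single a 1) fun t ht a' =>
      add_nonneg (hs.1 a') <| mul_nonneg ht.1.le <|
        (Pi.single_nonneg.2 zero_le_one : (0 : κ → ℝ) ≤ Pi.single a 1) a'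

theorem residual_dotProduct_fit_eq_zero (hs : IsNonnegLeastSquaresSol X S u h) :
    lsqResidual X S u h ⬝ᵥ (fun i => ∑ a ∈ S, h a * X i a) = 0 := by
  have hup := hs.residual_dotProduct_nonpos h fun t ht a =>
    add_nonneg (hs.1 a) (mul_nonneg ht.1.le (hs.1 a))
  have hdown := hs.residual_dotProduct_nonpos (-h) fun t ht a => by
    rw [Pi.neg_apply]
    nlinarith [hs.1 a, ht.2]
  simp only [Pi.neg_apply, neg_mul, Finset.sum_neg_distrib] at hdown
  rw [← Pi.neg_def, dotProduct_neg] at hdown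
  linarith

theorem residual_dotProduct_target (hs : IsNonnegLeastSquaresSol X S u h) :
    lsqResidual X S u h ⬝ᵥ u = lsqResidual X S u h ⬝ᵥ lsqResidual X S u h := by
  calc lsqResidual X S u h ⬝ᵥ u
      = lsqResidual X S u h ⬝ᵥ (lsqResidual X S u h + fun i => ∑ a ∈ S, h a * X i a) := by
        congr 1; ext i; simp [lsqResidual]
    _ = lsqResidual X S u h ⬝ᵥ lsqResidual X S u h := by
        rw [dotProduct_add, hs.residual_dotProduct_fit_eq_zero, add_zero]

end IsNonnegLeastSquaresSol

end NonnegLeastSquares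

theorem stmt7_general (m n : ℕ) (X : Matrix (Fin m) (Fin n) ℝ)
    (hX : ∀ i j, 0 ≤ X i j) (hcol : ∀ j, (fun i => X i j) ≠ 0)
    (A : Finset (Fin n)) (H : Fin n → Fin n → ℝ) (hH : ∀ a j, 0 ≤ H a j)
    (hsep : ∀ j i, X i j = ∑ a ∈ A, H a j * X i a)
    (At : Finset (Fin n))
    (Hs : Fin n → Fin n → ℝ) (hHs : ∀ a j, 0 ≤ Hs a j)
    (hmin : ∀ B : Fin n → Fin n → ℝ, (∀ a j, 0 ≤ B a j) →
      (∑ j, ∑ i, (X i j - ∑ a ∈ At, Hs a j * X i a) ^ 2) ≤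
        ∑ j, ∑ i, (X i j - ∑ a ∈ At, B a j * X i a) ^ 2)
    (R : Matrix (Fin m) (Fin n) ℝ)
    (hR : ∀ i j, R i j = X i j - ∑ a ∈ At, Hs a j * X i a)
    (i0 : Fin n) (hRi : (fun i => R i i0) ≠ 0)
    (p : Fin m → ℝ) (hp : ∀ i, 0 < p i)
    (jstar : Fin n)
    (hmax : ∀ j, j ≠ jstar →
      (∑ i, R i i0 * X i j) / (∑ i, p i * X i j) <
        (∑ i, R i i0 * X i jstar) / (∑ i, p i * X i jstar)) :
    jstar ∈ A \ At := by
  have hsol : IsNonnegLeastSquaresSol X At (fun i => X i i0) (fun a => Hs a i0) :=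
    ⟨fun a => hHs a i0, fun b hb =>
      le_of_forall_sum_le_sum_update (P := fun c => ∀ a, 0 ≤ c a)
        (fun j c => ∑ i, lsqResidual X At (fun i => X i j) c i ^ 2)
        (fun j a => hHs a j) (fun d hd => hmin (fun a j => d j a) fun a j => hd j a) i0 hb⟩
  have hr : (fun i => R i i0) = lsqResidual X At (fun i => X i i0) (fun a => Hs a i0) :=
    funext fun i => hR i i0
  have hden : ∀ j, 0 < ∑ i, p i * X i j := fun j =>
    dotProduct_pos_of_pos_of_nonneg hp (fun i => hX i j) (hcol j)
  have hcrit_i0 : 0 < (∑ i, R i i0 * X i i0) / (∑ i, p i * X i i0) := by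
    refine div_pos ?_ (hden i0)
    change 0 < (fun i => R i i0) ⬝ᵥ (fun i => X i i0)
    rw [hr, hsol.residual_dotProduct_target, ← hr]
    exact dotProduct_self_pos hRi
  refine Finset.mem_sdiff.2 ⟨?_, fun hjAt => ?_⟩
  · by_contra hjA
    have hcomb : ∀ q : Fin m → ℝ, ∑ i, q i * X i jstar = ∑ a ∈ A, H a jstar * ∑ i, q i * X i a :=
      fun q => by
        simp_rw [hsep jstar, Finset.mul_sum, mul_left_comm (q _)]
        exact Finset.sum_comm
    obtain ⟨a, ha, hle⟩ := exists_div_sum_le_div (N := fun a => ∑ i, R i i0 * X i a)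
      (fun a _ => hH a jstar) (fun a _ => hden a) (hcomb p ▸ hden jstar)
    rw [← hcomb, ← hcomb] at hle
    exact (hmax a (ne_of_mem_of_not_mem ha hjA)).not_ge hle
  · have hnum : ∑ i, R i i0 * X i jstar ≤ 0 := by
      change (fun i => R i i0) ⬝ᵥ (fun i => X i jstar) ≤ 0
      rw [hr]
      exact hsol.residual_dotProduct_col_nonpos hjAt
    have hcrit : (∑ i, R i i0 * X i jstar) / (∑ i, p i * X i jstar) ≤ 0 :=
      div_nonpos_of_nonpos_of_nonneg hnum (hden jstar).le
    rcases eq_or_ne i0 jstar with rfl | hi0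
    · linarith
    · linarith [hmax i0 hi0]

/-- Correctness of the XRAY detection step: the unique maximizer of the
detection criterion is an anchor not previously selected. -/
theorem stmt7 (m n : ℕ) (X : Matrix (Fin m) (Fin n) ℝ)
    (hX : ∀ i j, 0 ≤ X i j) (hcol : ∀ j, (fun i => X i j) ≠ 0)
    (A : Finset (Fin n)) (H : Fin n → Fin n → ℝ) (hH : ∀ a j, 0 ≤ H a j)
    (hsep : ∀ j i, X i j = ∑ a ∈ A, H a j * X i a)
    (hanch : ∀ a ∈ A, ¬ ∃ c : Fin n → ℝ, (∀ k, 0 ≤ c k) ∧ c a = 0 ∧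
      ∀ i, X i a = ∑ k, c k * X i k)
    (At : Finset (Fin n)) (hAt : At ⊆ A)
    (Hs : Fin n → Fin n → ℝ) (hHs : ∀ a j, 0 ≤ Hs a j)
    (hmin : ∀ B : Fin n → Fin n → ℝ, (∀ a j, 0 ≤ B a j) →
      (∑ j, ∑ i, (X i j - ∑ a ∈ At, Hs a j * X i a) ^ 2) ≤
        ∑ j, ∑ i, (X i j - ∑ a ∈ At, B a j * X i a) ^ 2)
    (R : Matrix (Fin m) (Fin n) ℝ)
    (hR : ∀ i j, R i j = X i j - ∑ a ∈ At, Hs a j * X i a)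
    (i0 : Fin n) (hRi : (fun i => R i i0) ≠ 0)
    (p : Fin m → ℝ) (hp : ∀ i, 0 < p i)
    (jstar : Fin n)
    (hmax : ∀ j, j ≠ jstar →
      (∑ i, R i i0 * X i j) / (∑ i, p i * X i j) <
        (∑ i, R i i0 * X i jstar) / (∑ i, p i * X i jstar)) :
    jstar ∈ A \ At :=
  stmt7_general m n X hX hcol A H hH hsep At Hs hHs hmin R hR i0 hRi p hp jstar hmax
end

section
/- Let X ∈ ℝ₊^{m×n}, let Aᵗ index a subset of columns, and let H* = argmin_{B ≥ 0} ‖X − X_{Aᵗ}B‖_F² with residual R = X − X_{Aᵗ}H*. If some column Xᵢ ∉ cone(X_{Aᵗ}), then the detection criterion max_j Rᵢᵀ Xⱼ/(pᵀXⱼ) (p strictly positive) is attained at an index outside Aᵗ, and its value is strictly positive. -/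
open Matrix

/-!
The current coefficients of column `i0` solve the nonnegative least squares problem
`min_{c ≥ 0} ‖x - ∑_{a ∈ Aᵗ} c_a X_a‖` with `x = X_{i0}`, since the Frobenius objective splits over
columns. Perturbing one coefficient at a time gives the KKT conditions for the residual `r`:
`⟪r, X_a⟫ ≤ 0` and `c_a ⟪r, X_a⟫ = 0` for `a ∈ Aᵗ`. Hence `⟪r, x⟫ = ‖r‖² + ∑ c_a ⟪r, X_a⟫ = ‖r‖²`,
which is positive because `x` is not in the cone. So the criterion is `≤ 0` on `Aᵗ` and positive at
`i0`, and any maximiser lies outside `Aᵗ`.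
-/

open Finset RealInnerProductSpace

lemma nonpos_of_forall_quadratic_nonneg {v q δ : ℝ} (hδ : 0 < δ)
    (h : ∀ t, 0 < t → t ≤ δ → 0 ≤ -2 * t * v + t ^ 2 * q) : v ≤ 0 := by
  by_contra! hv
  set t := min δ (v / (|q| + 1))
  have ht : 0 < t := lt_min hδ (by positivity)
  have htq : t * q < 2 * v := calc
    t * q ≤ v / (|q| + 1) * |q| := by
      nlinarith [min_le_right δ (v / (|q| + 1)), le_abs_self q, abs_nonneg q]
    _ < 2 * v := by
      rw [div_mul_eq_mul_div, div_lt_iff₀ (by positivity)]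
      nlinarith [abs_nonneg q]
  nlinarith [h t ht (min_le_left _ _)]

lemma le_of_sum_le_sum_of_forall_ne {ι : Type*} [Fintype ι] {f g : ι → ℝ}
    (i : ι) (hsum : ∑ j, f j ≤ ∑ j, g j) (hne : ∀ j ≠ i, f j = g j) : f i ≤ g i := by
  classical
  rw [← sum_erase_add _ _ (mem_univ i), ← sum_erase_add _ _ (mem_univ i),
    sum_congr rfl fun j hj => hne j (ne_of_mem_erase hj)] at hsum
  linarith

section NonnegLeastSquares

variable {E ι : Type*} [NormedAddCommGroup E] [InnerProductSpace ℝ E]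

def IsNNLSMinimizer (s : Finset ι) (y : ι → E) (x : E) (c : ι → ℝ) : Prop :=
  (∀ a, 0 ≤ c a) ∧
    ∀ d : ι → ℝ, (∀ a, 0 ≤ d a) → ‖x - ∑ a ∈ s, c a • y a‖ ≤ ‖x - ∑ a ∈ s, d a • y a‖

namespace IsNNLSMinimizer

variable {s : Finset ι} {y : ι → E} {x : E} {c : ι → ℝ}

lemma quadratic_nonneg (h : IsNNLSMinimizer s y x c) {a : ι} (ha : a ∈ s)
    {t : ℝ} (ht : 0 ≤ c a + t) :
    0 ≤ -2 * t * ⟪x - ∑ b ∈ s, c b • y b, y a⟫ + t ^ 2 * ‖y a‖ ^ 2 := by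
  classical
  set r := x - ∑ b ∈ s, c b • y b
  have hd : ∀ b, 0 ≤ c b + if b = a then t else 0 := by
    intro b
    split_ifs with hb
    · exact hb ▸ ht
    · simpa using h.1 b
  have hsum : ∑ b ∈ s, (c b + if b = a then t else 0) • y b = ∑ b ∈ s, c b • y b + t • y a := by
    simp only [add_smul, sum_add_distrib, ite_smul, zero_smul, sum_ite_eq', if_pos ha]
  have hle := h.2 _ hd
  rw [hsum, ← sub_sub] at hle
  have := pow_le_pow_left₀ (norm_nonneg _) hle 2
  rw [norm_sub_sq_real r, inner_smul_right, norm_smul, mul_pow, Real.norm_eq_abs, sq_abs] at this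
  linarith

lemma inner_residual_nonpos (h : IsNNLSMinimizer s y x c) {a : ι} (ha : a ∈ s) :
    ⟪x - ∑ b ∈ s, c b • y b, y a⟫ ≤ 0 :=
  nonpos_of_forall_quadratic_nonneg one_pos fun _ ht _ =>
    h.quadratic_nonneg ha (add_nonneg (h.1 a) ht.le)

lemma mul_inner_residual_eq_zero (h : IsNNLSMinimizer s y x c) {a : ι} (ha : a ∈ s) :
    c a * ⟪x - ∑ b ∈ s, c b • y b, y a⟫ = 0 := by
  rcases (h.1 a).eq_or_lt with hc | hc
  · rw [← hc, zero_mul]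
  -- as `c a > 0`, the coefficient of `a` may also be decreased a little
  have hge : 0 ≤ ⟪x - ∑ b ∈ s, c b • y b, y a⟫ := by
    refine neg_nonpos.mp (nonpos_of_forall_quadratic_nonneg (q := ‖y a‖ ^ 2) hc fun t _ htc => ?_)
    have := h.quadratic_nonneg ha (t := -t) (by linarith)
    linarith
  rw [le_antisymm (h.inner_residual_nonpos ha) hge, mul_zero]

lemma inner_residual_self (h : IsNNLSMinimizer s y x c) :
    ⟪x - ∑ b ∈ s, c b • y b, x⟫ = ‖x - ∑ b ∈ s, c b • y b‖ ^ 2 := by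
  calc ⟪x - ∑ b ∈ s, c b • y b, x⟫
      = ⟪x - ∑ b ∈ s, c b • y b, (x - ∑ b ∈ s, c b • y b) + ∑ b ∈ s, c b • y b⟫ := by
        rw [sub_add_cancel]
    _ = ‖x - ∑ b ∈ s, c b • y b‖ ^ 2 + ∑ a ∈ s, c a * ⟪x - ∑ b ∈ s, c b • y b, y a⟫ := by
        simp only [inner_add_right, real_inner_self_eq_norm_sq, inner_sum, inner_smul_right]
    _ = ‖x - ∑ b ∈ s, c b • y b‖ ^ 2 := by
        rw [sum_eq_zero fun a ha => h.mul_inner_residual_eq_zero ha, add_zero]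

lemma inner_residual_pos (h : IsNNLSMinimizer s y x c)
    (hx : ¬ ∃ d : ι → ℝ, (∀ a, 0 ≤ d a) ∧ x = ∑ a ∈ s, d a • y a) :
    0 < ⟪x - ∑ b ∈ s, c b • y b, x⟫ := by
  rw [h.inner_residual_self]
  refine pow_pos (norm_pos_iff.mpr fun hr => hx ⟨c, h.1, ?_⟩) 2
  exact sub_eq_zero.mp hr

end IsNNLSMinimizer

end NonnegLeastSquares

section Columns

variable {κ ι : Type*}

def columnVec (X : Matrix κ ι ℝ) (j : ι) : EuclideanSpace ℝ κ := WithLp.toLp 2 (Xᵀ j)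

lemma inner_columnVec [Fintype κ] (X Y : Matrix κ ι ℝ) (j k : ι) :
    ⟪columnVec X j, columnVec Y k⟫ = ∑ i, Y i k * X i j := rfl

lemma columnVec_sub_sum_smul (X : Matrix κ ι ℝ) (s : Finset ι) (d : ι → ℝ) (j : ι) :
    columnVec X j - ∑ a ∈ s, d a • columnVec X a =
      WithLp.toLp 2 fun i => X i j - ∑ a ∈ s, d a * X i a := by
  ext i
  simp [columnVec]

lemma columnVec_eq_sum_smul_iff (X : Matrix κ ι ℝ) (s : Finset ι) (d : ι → ℝ) (j : ι) :
    columnVec X j = ∑ a ∈ s, d a • columnVec X a ↔ ∀ i, X i j = ∑ a ∈ s, d a * X i a := by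
  rw [← sub_eq_zero, columnVec_sub_sum_smul]
  simp [funext_iff, sub_eq_zero]

lemma isNNLSMinimizer_columnVec [Fintype κ] [Fintype ι] {X : Matrix κ ι ℝ} {s : Finset ι}
    {H : ι → ι → ℝ} (hH : ∀ a j, 0 ≤ H a j)
    (hmin : ∀ B : ι → ι → ℝ, (∀ a j, 0 ≤ B a j) →
      ∑ j, ∑ i, (X i j - ∑ a ∈ s, H a j * X i a) ^ 2 ≤
        ∑ j, ∑ i, (X i j - ∑ a ∈ s, B a j * X i a) ^ 2)
    (j : ι) : IsNNLSMinimizer s (columnVec X) (columnVec X j) (fun a => H a j) := by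
  classical
  refine ⟨fun a => hH a j, fun d hd => ?_⟩
  rw [← sq_le_sq₀ (norm_nonneg _) (norm_nonneg _), columnVec_sub_sum_smul,
    columnVec_sub_sum_smul, EuclideanSpace.real_norm_sq_eq, EuclideanSpace.real_norm_sq_eq]
  set B : ι → ι → ℝ := fun a k => if k = j then d a else H a k
  have hB : ∀ a k, 0 ≤ B a k := fun a k => by
    simp only [B]
    split_ifs
    exacts [hd a, hH a k]
  simpa [B] using le_of_sum_le_sum_of_forall_ne j (hmin B hB) fun k hk => by simp [B, hk]

end Columns

theorem stmt8_general (m n : ℕ) (X : Matrix (Fin m) (Fin n) ℝ)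
    (At : Finset (Fin n))
    (Hs : Fin n → Fin n → ℝ) (hHs : ∀ a j, 0 ≤ Hs a j)
    (hmin : ∀ B : Fin n → Fin n → ℝ, (∀ a j, 0 ≤ B a j) →
      (∑ j, ∑ i, (X i j - ∑ a ∈ At, Hs a j * X i a) ^ 2) ≤
        ∑ j, ∑ i, (X i j - ∑ a ∈ At, B a j * X i a) ^ 2)
    (R : Matrix (Fin m) (Fin n) ℝ)
    (hR : ∀ i j, R i j = X i j - ∑ a ∈ At, Hs a j * X i a)
    (i0 : Fin n)
    (hout : ¬ ∃ c : Fin n → ℝ, (∀ a, 0 ≤ c a) ∧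
      ∀ i, X i i0 = ∑ a ∈ At, c a * X i a)
    (p : Fin m → ℝ) (hpx : ∀ j, 0 < ∑ i, p i * X i j) :
    ∃ j, j ∉ At ∧
      0 < (∑ i, R i i0 * X i j) / (∑ i, p i * X i j) ∧
      ∀ k, (∑ i, R i i0 * X i k) / (∑ i, p i * X i k) ≤
        (∑ i, R i i0 * X i j) / (∑ i, p i * X i j) := by
  have hNNLS := isNNLSMinimizer_columnVec hHs hmin i0
  have hres : columnVec X i0 - ∑ a ∈ At, Hs a i0 • columnVec X a = columnVec R i0 := by
    rw [columnVec_sub_sum_smul]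
    exact congrArg (WithLp.toLp 2) (funext fun i => (hR i i0).symm)
  have hcrit : ∀ j, ∑ i, R i i0 * X i j =
      ⟪columnVec X i0 - ∑ a ∈ At, Hs a i0 • columnVec X a, columnVec X j⟫ := fun j => by
    rw [hres, real_inner_comm, inner_columnVec]
  have hpos : 0 < (∑ i, R i i0 * X i i0) / ∑ i, p i * X i i0 := by
    refine div_pos ?_ (hpx i0)
    rw [hcrit]
    exact hNNLS.inner_residual_pos (by simpa only [columnVec_eq_sum_smul_iff] using hout)
  have hAt : ∀ a ∈ At, (∑ i, R i i0 * X i a) / ∑ i, p i * X i a ≤ 0 := fun a ha =>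
    div_nonpos_of_nonpos_of_nonneg (hcrit a ▸ hNNLS.inner_residual_nonpos ha) (hpx a).le
  obtain ⟨j, -, hj⟩ := exists_max_image univ
    (fun k => (∑ i, R i i0 * X i k) / ∑ i, p i * X i k) ⟨i0, mem_univ i0⟩
  have hjpos := hpos.trans_le (hj i0 (mem_univ i0))
  exact ⟨j, fun hjA => (hAt j hjA).not_gt hjpos, hjpos, fun k => hj k (mem_univ k)⟩

/-- If some column lies outside the current cone, the detection criterion is
maximized at an index outside Aᵗ with strictly positive value. -/
theorem stmt8 (m n : ℕ) (X : Matrix (Fin m) (Fin n) ℝ)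
    (hX : ∀ i j, 0 ≤ X i j) (hcol : ∀ j, (fun i => X i j) ≠ 0)
    (At : Finset (Fin n))
    (Hs : Fin n → Fin n → ℝ) (hHs : ∀ a j, 0 ≤ Hs a j)
    (hmin : ∀ B : Fin n → Fin n → ℝ, (∀ a j, 0 ≤ B a j) →
      (∑ j, ∑ i, (X i j - ∑ a ∈ At, Hs a j * X i a) ^ 2) ≤
        ∑ j, ∑ i, (X i j - ∑ a ∈ At, B a j * X i a) ^ 2)
    (R : Matrix (Fin m) (Fin n) ℝ)
    (hR : ∀ i j, R i j = X i j - ∑ a ∈ At, Hs a j * X i a)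
    (i0 : Fin n)
    (hout : ¬ ∃ c : Fin n → ℝ, (∀ a, 0 ≤ c a) ∧
      ∀ i, X i i0 = ∑ a ∈ At, c a * X i a)
    (p : Fin m → ℝ) (hp : ∀ i, 0 < p i) (hpx : ∀ j, 0 < ∑ i, p i * X i j) :
    ∃ j, j ∉ At ∧
      0 < (∑ i, R i i0 * X i j) / (∑ i, p i * X i j) ∧
      ∀ k, (∑ i, R i i0 * X i k) / (∑ i, p i * X i k) ≤
        (∑ i, R i i0 * X i j) / (∑ i, p i * X i j) :=
  stmt8_general m n X At Hs hHs hmin R hR i0 hout p hpx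
end
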